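/- arXiv:1311.0331 — 9 statements merged into one kernel-verified Lean document; each statement's English description precedes it below -/
import Mathlib

section
/- Wadge's Duality theorem fails in the Scott domain 𝒫(ℕ): let 𝒳 = {X ⊆ ℕ : 0 ∈ X} and 𝒴 = {X ⊆ ℕ : X is finite}. Then there is no continuous map f : 𝒫(ℕ) → 𝒫(ℕ) with 𝒴 = f⁻¹(𝒫(ℕ) ∖ 𝒳), and there is no continuous map g : 𝒫(ℕ) → 𝒫(ℕ) with 𝒳 = g⁻¹(𝒴). -/
open Topology

/-- The Scott topology on 𝒫(ℕ), generated by the basic open sets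
`B_A = {X : A ⊆ X}` for finite `A ⊆ ℕ`. -/
def ScottPN : TopologicalSpace (Set ℕ) :=
  TopologicalSpace.generateFrom
    {O : Set (Set ℕ) | ∃ A : Set ℕ, A.Finite ∧ O = {X : Set ℕ | A ⊆ X}}

/-- An ordinal is even if its canonical decomposition `λ + n`
(`λ` zero or a limit, `n < ω`) has `n` even. -/
def OrdEven (o : Ordinal) : Prop :=
  ∃ (l : Ordinal) (n : ℕ), (l = 0 ∨ Order.IsSuccLimit l) ∧ o = l + 2 * n

/-- Two ordinals have the same parity. -/
def SameParity (a b : Ordinal) : Prop := OrdEven a ↔ OrdEven b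

/-- The Hausdorff difference operation `D_α`. -/
def DOp {E : Type*} (α : Ordinal) (U : Ordinal → Set E) : Set E :=
  ⋃ β ∈ {β : Ordinal | β < α ∧ ¬ SameParity β α}, (U β \ ⋃ γ ∈ Set.Iio β, U γ)

/-- Membership in the Hausdorff difference class `D_α(E)`. -/
def MemD {E : Type*} (t : TopologicalSpace E) (α : Ordinal) (A : Set E) : Prop :=
  ∃ U : Ordinal → Set E, (∀ β < α, IsOpen[t] (U β)) ∧ A = DOp α U

/-!
A Scott-open family is upward closed and contains a finite subset of each of its members.
The family of infinite sets contains `ℕ` but no finite set, so it is not open; this rules out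
`f`, since `f⁻¹' 𝒳` would be exactly that family. Continuous maps are monotone, so `g⁻¹' 𝒴` is
downward closed; but `ℕ ∈ 𝒳` while its subset `ℕ \ {0}` is not, which rules out `g`.
-/

namespace ScottPN

open Set TopologicalSpace

attribute [local instance] ScottPN

theorem isTopologicalBasis :
    IsTopologicalBasis
      {O : Set (Set ℕ) | ∃ A : Set ℕ, A.Finite ∧ O = {X : Set ℕ | A ⊆ X}} where
  exists_subset_inter := by
    rintro _ ⟨A, hA, rfl⟩ _ ⟨B, hB, rfl⟩ X hX
    exact ⟨{Y | A ∪ B ⊆ Y}, ⟨A ∪ B, hA.union hB, rfl⟩, union_subset hX.1 hX.2,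
      fun _ => union_subset_iff.mp⟩
  sUnion_eq := eq_univ_of_forall fun X => ⟨{Y | ∅ ⊆ Y}, ⟨∅, finite_empty, rfl⟩, empty_subset X⟩
  eq_generateFrom := rfl

theorem isOpen_iff {O : Set (Set ℕ)} :
    IsOpen O ↔ ∀ X ∈ O, ∃ A ⊆ X, A.Finite ∧ ∀ Y, A ⊆ Y → Y ∈ O := by
  rw [isTopologicalBasis.isOpen_iff]
  constructor
  · rintro h X hX
    obtain ⟨_, ⟨A, hA, rfl⟩, hXA, hAO⟩ := h X hX
    exact ⟨A, hXA, hA, fun Y hY => hAO hY⟩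
  · rintro h X hX
    obtain ⟨A, hAX, hA, hAO⟩ := h X hX
    exact ⟨_, ⟨A, hA, rfl⟩, hAX, fun Y hY => hAO Y hY⟩

theorem isOpen_setOf_mem (n : ℕ) : IsOpen {X : Set ℕ | n ∈ X} :=
  isOpen_iff.mpr fun _ hX =>
    ⟨{n}, singleton_subset_iff.mpr hX, finite_singleton n, fun _ => singleton_subset_iff.mp⟩

theorem isOpen_preimage_setOf_mem {f : Set ℕ → Set ℕ} (hf : Continuous f) (n : ℕ) :
    IsOpen (f ⁻¹' {X | n ∈ X}) :=
  hf.isOpen_preimage _ (isOpen_setOf_mem n)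

theorem isUpperSet_of_isOpen {O : Set (Set ℕ)} (hO : IsOpen O) : IsUpperSet O := by
  intro X Y hXY hX
  obtain ⟨A, hAX, -, hAO⟩ := isOpen_iff.mp hO X hX
  exact hAO Y (hAX.trans hXY)

theorem not_isOpen_setOf_infinite : ¬ IsOpen {X : Set ℕ | X.Infinite} := by
  intro hO
  obtain ⟨A, -, hA, hAO⟩ := isOpen_iff.mp hO univ infinite_univ
  exact hAO A subset_rfl hA

theorem monotone_of_continuous {f : Set ℕ → Set ℕ} (hf : Continuous f) :
    Monotone f := by
  intro X Y hXY n hn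
  exact isUpperSet_of_isOpen (isOpen_preimage_setOf_mem hf n) hXY hn

end ScottPN

/-- Wadge's Duality theorem fails in the Scott domain `𝒫(ℕ)`:
with `𝒳 = {X | 0 ∈ X}` and `𝒴 = {X | X finite}`, neither is `𝒴`
Wadge reducible to the complement of `𝒳`, nor `𝒳` to `𝒴`. -/
theorem duality_fails_in_ScottPN :
    (¬ ∃ f : Set ℕ → Set ℕ, Continuous[ScottPN, ScottPN] f ∧
      {X : Set ℕ | X.Finite} = f ⁻¹' ({X : Set ℕ | 0 ∈ X}ᶜ)) ∧
    (¬ ∃ g : Set ℕ → Set ℕ, Continuous[ScottPN, ScottPN] g ∧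
      {X : Set ℕ | 0 ∈ X} = g ⁻¹' {X : Set ℕ | X.Finite}) := by
  constructor
  · rintro ⟨f, hf, hfeq⟩
    have hinf : {X : Set ℕ | X.Infinite} = f ⁻¹' {X | 0 ∈ X} := by
      rw [← compl_inj_iff, ← Set.preimage_compl, ← hfeq, Set.compl_ofPred]
      simp only [Set.not_infinite]
    apply ScottPN.not_isOpen_setOf_infinite
    rw [hinf]
    exact ScottPN.isOpen_preimage_setOf_mem hf 0
  · rintro ⟨g, hg, hgeq⟩
    have huniv : (g Set.univ).Finite := hgeq.subset (Set.mem_univ 0)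
    have hcompl : {0}ᶜ ∉ g ⁻¹' {X | X.Finite} := by
      rw [← hgeq]
      exact not_not_intro rfl
    exact hcompl (huniv.subset (ScottPN.monotone_of_continuous hg (Set.subset_univ _)))
end

section
/- In the Scott domain 𝒫(ℕ), Wadge reducibility, finite-to-one Wadge reducibility and one-to-one Wadge reducibility are pairwise inequivalent. Concretely, let 𝒪₁ = {X ⊆ ℕ : X ≠ ∅}, 𝒪₂ = {X ⊆ ℕ : ∃ n > 0, n ∈ X} and 𝒪₃ = {X ⊆ ℕ : 0 ∈ X and ∃ n > 0, n ∈ X}. Then: (a) there is a finite-to-one continuous f : 𝒫(ℕ) → 𝒫(ℕ) with 𝒪₂ = f⁻¹(𝒪₁), but no injective continuous map reduces 𝒪₂ to 𝒪₁; (b) there are continuous maps reducing 𝒪₃ to 𝒪₁ and reducing 𝒪₃ to 𝒪₂, but no finite-to-one continuous map reduces 𝒪₃ to 𝒪₁ and no finite-to-one continuous map reduces 𝒪₃ to 𝒪₂. -/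
open Topology

/-! The positive halves are witnessed by `X ↦ X \ {0}` and by `X ↦ X \ {0}` gated by `0 ∈ X`,
which are continuous because the preimage of each subbasic open `{Y | m ∈ Y}` is empty or a finite
intersection of such sets. The negative halves need no continuity: a reduction `f` of `A` to `B`
maps `Aᶜ` into `Bᶜ`. The complement of `𝒪₁` is the single point `∅`, so an injective reduction
to `𝒪₁` forces `Aᶜ` to be a subsingleton, whereas `∅` and `{0}` both lie outside `𝒪₂`; the
complements of `𝒪₁` and `𝒪₂` are finite, so a finite-to-one reduction to either forces `Aᶜ` to be
finite, whereas all the singletons `{n + 1}` lie outside `𝒪₃`. -/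

theorem isOpen_scottPN_setOf_mem (m : ℕ) : IsOpen[ScottPN] {X : Set ℕ | m ∈ X} :=
  TopologicalSpace.GenerateOpen.basic _ ⟨{m}, Set.finite_singleton m, by simp⟩

theorem continuous_scottPN_of_isOpen_setOf_mem {f : Set ℕ → Set ℕ}
    (hf : ∀ m, IsOpen[ScottPN] {X | m ∈ f X}) : Continuous[ScottPN, ScottPN] f := by
  rw [ScottPN, continuous_generateFrom_iff]
  rintro _ ⟨A, hA, rfl⟩
  have hpre : f ⁻¹' {Y | A ⊆ Y} = ⋂ m ∈ A, {X | m ∈ f X} := by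
    ext X
    simp [Set.subset_def]
  rw [hpre]
  exact @Set.Finite.isOpen_biInter _ _ ScottPN _ _ hA fun m _ => hf m

theorem continuous_scottPN_diff_singleton (a : ℕ) :
    Continuous[ScottPN, ScottPN] fun X : Set ℕ => X \ {a} := by
  refine continuous_scottPN_of_isOpen_setOf_mem fun m => ?_
  rcases eq_or_ne m a with rfl | hma
  · simp
  · simpa [hma] using isOpen_scottPN_setOf_mem m

theorem continuous_scottPN_setOf_mem_and_mem_diff_singleton (a : ℕ) :
    Continuous[ScottPN, ScottPN] fun X : Set ℕ => {m | a ∈ X ∧ m ∈ X \ {a}} := by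
  refine continuous_scottPN_of_isOpen_setOf_mem fun m => ?_
  rcases eq_or_ne m a with rfl | hma
  · simp
  · simpa [hma, Set.ofPred_and] using
      @IsOpen.inter _ ScottPN _ _ (isOpen_scottPN_setOf_mem a) (isOpen_scottPN_setOf_mem m)

theorem Set.finite_preimage_diff_singleton {α : Type*} (a : α) (Y : Set α) :
    ((· \ {a}) ⁻¹' {Y}).Finite := by
  refine (Set.toFinite {Y, insert a Y}).subset fun X (hX : X \ {a} = Y) => ?_
  by_cases ha : a ∈ X
  · right
    rw [← hX, Set.insert_sdiff_singleton, Set.insert_eq_of_mem ha]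
    rfl
  · left
    rw [← hX, sdiff_singleton_eq_self ha]

section Reduction

variable {α β : Type*} {f : α → β} {A : Set α} {B : Set β}

theorem Set.Subsingleton.compl_of_injective_reduction (hB : Bᶜ.Subsingleton)
    (hf : Function.Injective f) (hred : A = f ⁻¹' B) : Aᶜ.Subsingleton := by
  rw [hred, ← Set.preimage_compl]
  exact hB.preimage hf

theorem Set.Finite.compl_of_finite_to_one_reduction (hB : Bᶜ.Finite)
    (hf : ∀ y, (f ⁻¹' {y}).Finite) (hred : A = f ⁻¹' B) : Aᶜ.Finite := by
  rw [hred, ← Set.preimage_compl]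
  exact hB.preimage' fun y _ => hf y

end Reduction

theorem compl_setOf_nonempty : {X : Set ℕ | X.Nonempty}ᶜ = {∅} := by
  ext X
  simp [Set.not_nonempty_iff_eq_empty]

theorem compl_setOf_exists_pos_mem : {X : Set ℕ | ∃ n > 0, n ∈ X}ᶜ = Set.powerset {0} := by
  ext X
  simp only [Set.mem_compl_iff, Set.mem_ofPred_eq, Set.mem_powerset_iff, Set.subset_def,
    Set.mem_singleton_iff, not_exists, not_and, gt_iff_lt, Nat.pos_iff_ne_zero, not_imp_not]

theorem not_subsingleton_compl_setOf_exists_pos_mem :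
    ¬ {X : Set ℕ | ∃ n > 0, n ∈ X}ᶜ.Subsingleton := by
  rw [compl_setOf_exists_pos_mem]
  intro h
  have := h (Set.empty_subset {0}) (subset_refl ({0} : Set ℕ))
  simp [Set.ext_iff] at this

theorem infinite_compl_setOf_zero_mem_and_exists_pos_mem :
    {X : Set ℕ | 0 ∈ X ∧ ∃ n > 0, n ∈ X}ᶜ.Infinite := by
  have hsucc : Function.Injective fun n : ℕ => ({n + 1} : Set ℕ) := fun m n h => by
    simpa using h
  refine (Set.infinite_range_of_injective hsucc).mono ?_
  rintro _ ⟨n, rfl⟩ ⟨h0, -⟩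
  simp at h0

theorem setOf_exists_pos_mem_eq_preimage_diff_zero :
    {X : Set ℕ | ∃ n > 0, n ∈ X} = (· \ {0}) ⁻¹' {X : Set ℕ | X.Nonempty} := by
  ext X
  simp only [Set.mem_ofPred_eq, Set.mem_preimage, Set.Nonempty, Set.mem_sdiff,
    Set.mem_singleton_iff, gt_iff_lt, Nat.pos_iff_ne_zero, and_comm]

theorem setOf_zero_mem_and_exists_pos_mem_eq_preimage_nonempty :
    {X : Set ℕ | 0 ∈ X ∧ ∃ n > 0, n ∈ X} =
      (fun X : Set ℕ => {m | 0 ∈ X ∧ m ∈ X \ {0}}) ⁻¹' {X : Set ℕ | X.Nonempty} := by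
  ext X
  simp only [Set.mem_ofPred_eq, Set.mem_preimage, Set.Nonempty, Set.mem_sdiff,
    Set.mem_singleton_iff]
  constructor
  · rintro ⟨h0, n, hn, hnX⟩
    exact ⟨n, h0, hnX, hn.ne'⟩
  · rintro ⟨n, h0, hnX, hn⟩
    exact ⟨h0, n, Nat.pos_of_ne_zero hn, hnX⟩

theorem setOf_zero_mem_and_exists_pos_mem_eq_preimage_exists_pos_mem :
    {X : Set ℕ | 0 ∈ X ∧ ∃ n > 0, n ∈ X} =
      (fun X : Set ℕ => {m | 0 ∈ X ∧ m ∈ X \ {0}}) ⁻¹' {X : Set ℕ | ∃ n > 0, n ∈ X} := by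
  ext X
  simp only [Set.mem_ofPred_eq, Set.mem_preimage, Set.mem_sdiff, Set.mem_singleton_iff]
  constructor
  · rintro ⟨h0, n, hn, hnX⟩
    exact ⟨n, hn, h0, hnX, hn.ne'⟩
  · rintro ⟨n, hn, h0, hnX, -⟩
    exact ⟨h0, n, hn, hnX⟩

/-- In the Scott domain `𝒫(ℕ)`, Wadge reducibility, finite-to-one Wadge
reducibility and one-to-one Wadge reducibility are pairwise inequivalent,
as witnessed by `𝒪₁ = {X | X ≠ ∅}`, `𝒪₂ = {X | ∃ n > 0, n ∈ X}` and
`𝒪₃ = {X | 0 ∈ X ∧ ∃ n > 0, n ∈ X}`. -/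
theorem wadge_one_one_finite_one_inequivalent :
    -- (a) a finite-to-one continuous reduction of 𝒪₂ to 𝒪₁ ...
    (∃ f : Set ℕ → Set ℕ, Continuous[ScottPN, ScottPN] f ∧
        (∀ Y : Set ℕ, (f ⁻¹' {Y}).Finite) ∧
        {X : Set ℕ | ∃ n > 0, n ∈ X} = f ⁻¹' {X : Set ℕ | X.Nonempty}) ∧
    -- ... but no injective continuous reduction of 𝒪₂ to 𝒪₁;
    (¬ ∃ f : Set ℕ → Set ℕ, Continuous[ScottPN, ScottPN] f ∧
        Function.Injective f ∧
        {X : Set ℕ | ∃ n > 0, n ∈ X} = f ⁻¹' {X : Set ℕ | X.Nonempty}) ∧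
    -- (b) continuous reductions of 𝒪₃ to 𝒪₁ and to 𝒪₂ ...
    (∃ f : Set ℕ → Set ℕ, Continuous[ScottPN, ScottPN] f ∧
        {X : Set ℕ | 0 ∈ X ∧ ∃ n > 0, n ∈ X} = f ⁻¹' {X : Set ℕ | X.Nonempty}) ∧
    (∃ f : Set ℕ → Set ℕ, Continuous[ScottPN, ScottPN] f ∧
        {X : Set ℕ | 0 ∈ X ∧ ∃ n > 0, n ∈ X} = f ⁻¹' {X : Set ℕ | ∃ n > 0, n ∈ X}) ∧
    -- ... but no finite-to-one continuous reduction of 𝒪₃ to 𝒪₁ nor to 𝒪₂.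
    (¬ ∃ f : Set ℕ → Set ℕ, Continuous[ScottPN, ScottPN] f ∧
        (∀ Y : Set ℕ, (f ⁻¹' {Y}).Finite) ∧
        {X : Set ℕ | 0 ∈ X ∧ ∃ n > 0, n ∈ X} = f ⁻¹' {X : Set ℕ | X.Nonempty}) ∧
    (¬ ∃ f : Set ℕ → Set ℕ, Continuous[ScottPN, ScottPN] f ∧
        (∀ Y : Set ℕ, (f ⁻¹' {Y}).Finite) ∧
        {X : Set ℕ | 0 ∈ X ∧ ∃ n > 0, n ∈ X} = f ⁻¹' {X : Set ℕ | ∃ n > 0, n ∈ X}) := by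
  have hsub₁ : {X : Set ℕ | X.Nonempty}ᶜ.Subsingleton :=
    compl_setOf_nonempty ▸ Set.subsingleton_singleton
  have hfin₁ : {X : Set ℕ | X.Nonempty}ᶜ.Finite :=
    compl_setOf_nonempty ▸ Set.finite_singleton ∅
  have hfin₂ : {X : Set ℕ | ∃ n > 0, n ∈ X}ᶜ.Finite :=
    compl_setOf_exists_pos_mem ▸ (Set.finite_singleton 0).powerset
  refine ⟨⟨_, continuous_scottPN_diff_singleton 0, Set.finite_preimage_diff_singleton 0,
      setOf_exists_pos_mem_eq_preimage_diff_zero⟩, ?_,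
    ⟨_, continuous_scottPN_setOf_mem_and_mem_diff_singleton 0,
      setOf_zero_mem_and_exists_pos_mem_eq_preimage_nonempty⟩,
    ⟨_, continuous_scottPN_setOf_mem_and_mem_diff_singleton 0,
      setOf_zero_mem_and_exists_pos_mem_eq_preimage_exists_pos_mem⟩, ?_, ?_⟩
  · rintro ⟨f, -, hinj, hred⟩
    exact not_subsingleton_compl_setOf_exists_pos_mem
      (hsub₁.compl_of_injective_reduction hinj hred)
  · rintro ⟨f, -, hfin, hred⟩
    exact infinite_compl_setOf_zero_mem_and_exists_pos_mem
      (hfin₁.compl_of_finite_to_one_reduction hfin hred)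
  · rintro ⟨f, -, hfin, hred⟩
    exact infinite_compl_setOf_zero_mem_and_exists_pos_mem
      (hfin₂.compl_of_finite_to_one_reduction hfin hred)
end

section
/- For every ordinal α with 1 ≤ α < ω₁ there exist a family 𝒜 ∈ D_α(𝒫(ℕ)) and an 𝒜-special chain (X_β)_{β≤α} of subsets of ℕ such that X_α is an infinite subset of ℕ and X_β ∖ X_{β+1} is an infinite subset of ℕ for every β < α. -/
open Topology

/-- A decreasing `A`-alternating chain of length `α+1` in `𝒫(ℕ)`. -/
def AltChain (A : Set (Set ℕ)) (α : Ordinal) (X : Ordinal → Set ℕ) : Prop :=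
  (∀ β δ : Ordinal, β < δ → δ ≤ α → X δ ⊂ X β) ∧
  (∀ β ≤ α, X β ∈ A ↔ ¬ SameParity β α)

/-- An `A`-special `(α+1)`-chain in `𝒫(ℕ)`. -/
def SpecialChain (A : Set (Set ℕ)) (α : Ordinal) (X : Ordinal → Set ℕ) : Prop :=
  AltChain A α X ∧
  (∀ β < α, ∀ Y : Set ℕ, Y ⊆ X β → X (β + 1) ⊂ Y → (Y ∈ A ↔ ¬ SameParity β α)) ∧
  (∀ Y : Set ℕ, Y ⊆ X α → Y ∉ A)

/-!
Colour ℕ by `c : ℕ → Iic α` so that every colour is used infinitely often (possible because `α`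
is countable), and take `X β = {n | β ≤ c n}`. A set `Y` goes into `𝒜` when the least colour
occurring in `Y` is some `β < α` of parity opposite to `α`. The sets
`U β = {Y | some n ∈ Y has c n ≤ β}` are Scott open, and `Y ∈ U β \ ⋃_{γ<β} U γ` says exactly
that the least colour in `Y` is `β`, so `𝒜 = D_α(U)`. A set `Y` with `X (β+1) ⊊ Y ⊆ X β` has
least colour `β`, while subsets of `X α` have no colour below `α`.
-/

open Set

theorem isOpen_setOf_exists_mem (p : ℕ → Prop) :
    IsOpen[ScottPN] {Y : Set ℕ | ∃ n ∈ Y, p n} := by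
  let _ := ScottPN
  have : {Y : Set ℕ | ∃ n ∈ Y, p n} = ⋃ n ∈ {n | p n}, {Y : Set ℕ | {n} ⊆ Y} := by
    ext Y; simp [and_comm]
  rw [this]
  exact isOpen_biUnion fun n _ =>
    TopologicalSpace.isOpen_generateFrom_of_mem ⟨{n}, finite_singleton n, rfl⟩

theorem mem_DOp_iff {E : Type*} (α : Ordinal) (U : Ordinal → Set E) (x : E) :
    x ∈ DOp α U ↔ ∃ β < α, ¬ SameParity β α ∧ x ∈ U β ∧ ∀ γ < β, x ∉ U γ := by
  simp only [DOp, mem_iUnion, mem_sdiff, mem_ofPred_eq, mem_Iio, exists_prop, not_exists,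
    not_and]
  tauto

theorem countable_Iic_of_card_le_aleph0 {α : Ordinal} (h : α.card ≤ Cardinal.aleph0) :
    (Iic α).Countable := by
  rw [← Order.Iio_succ, Order.succ_eq_add_one, ← Cardinal.le_aleph0_iff_set_countable,
    Cardinal.mk_Iio_ordinal, Ordinal.card_add_one, Cardinal.lift_le_aleph0]
  exact Cardinal.add_le_aleph0.mpr ⟨h, Cardinal.one_le_aleph0⟩

theorem exists_nat_forall_preimage_singleton_infinite (ι : Type*) [Countable ι] [Nonempty ι] :
    ∃ c : ℕ → ι, ∀ i, (c ⁻¹' {i}).Infinite := by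
  obtain ⟨s, hs⟩ := exists_surjective_nat ι
  refine ⟨fun n => s n.unpair.1, fun i => ?_⟩
  obtain ⟨m, rfl⟩ := hs i
  refine infinite_of_injective_forall_mem (f := Nat.pair m) ?_ fun k => by simp
  intro k k' h
  simpa using congrArg (fun n => n.unpair.2) h

section Coloring

variable (c : ℕ → Ordinal) (α : Ordinal)

def superlevel (β : Ordinal) : Set ℕ := c ⁻¹' Ici β

def minParityFamily : Set (Set ℕ) :=
  {Y | ∃ β < α, ¬ SameParity β α ∧ IsLeast (c '' Y) β}

variable {c α}

theorem superlevel_antitone : Antitone (superlevel c) :=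
  fun _ _ h => preimage_mono (Ici_subset_Ici.mpr h)

theorem superlevel_diff_add_one (β : Ordinal) :
    superlevel c β \ superlevel c (β + 1) = c ⁻¹' {β} := by
  ext n
  simp [superlevel, Order.add_one_le_iff, le_antisymm_iff, and_comm]

theorem superlevel_ssubset {β δ : Ordinal} (hβ : (c ⁻¹' {β}).Nonempty) (h : β < δ) :
    superlevel c δ ⊂ superlevel c β := by
  refine (superlevel_antitone h.le).ssubset_of_not_subset fun hsub => ?_
  obtain ⟨n, hn⟩ := hβ
  exact (show δ ≤ c n from hsub (show β ≤ c n from hn.ge)).not_gt (hn ▸ h)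

theorem isLeast_image_iff {Y : Set ℕ} {β : Ordinal} :
    IsLeast (c '' Y) β ↔ (∃ n ∈ Y, c n ≤ β) ∧ ∀ n ∈ Y, β ≤ c n := by
  refine ⟨fun ⟨⟨n, hn, hnβ⟩, hlow⟩ => ⟨⟨n, hn, hnβ.le⟩, fun m hm => hlow ⟨m, hm, rfl⟩⟩, ?_⟩
  rintro ⟨⟨n, hn, hnβ⟩, hlow⟩
  exact ⟨⟨n, hn, hnβ.antisymm (hlow n hn)⟩, forall_mem_image.2 hlow⟩

theorem isLeast_image_iff_forall_lt {Y : Set ℕ} {β : Ordinal} :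
    IsLeast (c '' Y) β ↔ (∃ n ∈ Y, c n ≤ β) ∧ ∀ γ < β, ¬ ∃ n ∈ Y, c n ≤ γ := by
  simp only [isLeast_image_iff, not_exists, not_and, not_le]
  refine and_congr_right' ⟨fun h γ hγ n hn => hγ.trans_le (h n hn), fun h n hn => ?_⟩
  exact forall_lt_iff_le.1 fun γ hγ => h γ hγ n hn

theorem isLeast_image_iff_subset_superlevel {Y : Set ℕ} {β : Ordinal} :
    IsLeast (c '' Y) β ↔ Y ⊆ superlevel c β ∧ ¬ Y ⊆ superlevel c (β + 1) := by
  simp only [isLeast_image_iff, superlevel, subset_def, mem_preimage, mem_Ici, not_forall,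
    Order.add_one_le_iff, not_lt, exists_prop, and_comm]

theorem memD_minParityFamily : MemD ScottPN α (minParityFamily c α) := by
  refine ⟨fun β => {Y | ∃ n ∈ Y, c n ≤ β}, fun β _ => isOpen_setOf_exists_mem _, ?_⟩
  ext Y
  simp only [mem_DOp_iff, minParityFamily, isLeast_image_iff_forall_lt, mem_ofPred_eq]

theorem mem_minParityFamily_iff {Y : Set ℕ} {β : Ordinal} (hY : IsLeast (c '' Y) β)
    (hβ : β < α) : Y ∈ minParityFamily c α ↔ ¬ SameParity β α :=
  ⟨fun ⟨_, _, hpar, hY'⟩ => hY'.unique hY ▸ hpar, fun hpar => ⟨β, hβ, hpar, hY⟩⟩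

theorem notMem_minParityFamily {Y : Set ℕ} (hY : Y ⊆ superlevel c α) :
    Y ∉ minParityFamily c α := by
  rintro ⟨β, hβ, -, ⟨n, hn, rfl⟩, -⟩
  exact (show α ≤ c n from hY hn).not_gt hβ

theorem specialChain_superlevel (hc : ∀ δ ≤ α, (c ⁻¹' {δ}).Nonempty) :
    SpecialChain (minParityFamily c α) α (superlevel c) := by
  refine ⟨⟨fun β δ h hδ => superlevel_ssubset (hc β (h.le.trans hδ)) h, fun β hβ => ?_⟩,
    fun β hβ Y hYβ hY => ?_, fun Y hY => notMem_minParityFamily hY⟩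
  · rcases hβ.eq_or_lt with rfl | hβ
    · simp [notMem_minParityFamily subset_rfl, SameParity]
    · refine mem_minParityFamily_iff (isLeast_image_iff_subset_superlevel.2 ⟨subset_rfl, ?_⟩) hβ
      exact (superlevel_ssubset (hc β hβ.le) (Order.lt_add_one_iff.2 le_rfl)).not_subset
  · exact mem_minParityFamily_iff (isLeast_image_iff_subset_superlevel.2 ⟨hYβ, hY.not_subset⟩) hβ

end Coloring

theorem exists_special_chain_with_infinite_differences_general
    (α : Ordinal) (h2 : α.card ≤ Cardinal.aleph0) :
    ∃ (A : Set (Set ℕ)) (X : Ordinal → Set ℕ),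
      MemD ScottPN α A ∧ SpecialChain A α X ∧
      (X α).Infinite ∧ (∀ β < α, (X β \ X (β + 1)).Infinite) := by
  have : Countable (Iic α) := (countable_Iic_of_card_le_aleph0 h2).to_subtype
  have : Nonempty (Iic α) := ⟨⟨α, self_mem_Iic⟩⟩
  obtain ⟨c, hc⟩ := exists_nat_forall_preimage_singleton_infinite (Iic α)
  let c' : ℕ → Ordinal := fun n => c n
  have hfiber : ∀ δ ≤ α, (c' ⁻¹' {δ}).Infinite := fun δ hδ =>
    (hc ⟨δ, hδ⟩).mono fun n (hn : c n = ⟨δ, hδ⟩) => congrArg Subtype.val hn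
  refine ⟨minParityFamily c' α, superlevel c', memD_minParityFamily,
    specialChain_superlevel fun δ hδ => (hfiber δ hδ).nonempty,
    (hfiber α le_rfl).mono fun n (hn : c' n = α) => hn.ge, fun β hβ => ?_⟩
  rw [superlevel_diff_add_one]
  exact hfiber β hβ.le

/-- For every countable ordinal `α ≥ 1` there exist `𝒜 ∈ D_α(𝒫(ℕ))` and an
`𝒜`-special chain `(X_β)_{β ≤ α}` with `X_α` infinite and each
`X_β \ X_{β+1}` infinite. -/
theorem exists_special_chain_with_infinite_differences
    (α : Ordinal) (h1 : 1 ≤ α) (h2 : α.card ≤ Cardinal.aleph0) :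
    ∃ (A : Set (Set ℕ)) (X : Ordinal → Set ℕ),
      MemD ScottPN α A ∧ SpecialChain A α X ∧
      (X α).Infinite ∧ (∀ β < α, (X β \ X (β + 1)).Infinite) :=
  exists_special_chain_with_infinite_differences_general α h2
end

section
/- For every ordinal α with 1 ≤ α < ω₁ there exists a Wadge complete set for D_α(𝒫(ℕ)): a family H ∈ D_α(𝒫(ℕ)) such that every member of D_α(𝒫(ℕ)) is Wadge reducible to H. -/
open Topology

/-- Wadge reducibility between families of subsets of ℕ (Scott topology). -/
def WadgeLe (A B : Set (Set ℕ)) : Prop :=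
  ∃ f : Set ℕ → Set ℕ, Continuous[ScottPN, ScottPN] f ∧ A = f ⁻¹' B

/-! Let `MeetsColumn n` be the Scott-open set of those `X` that meet the `n`-th column
`{⟨n, k⟩ | k : ℕ}` of `ℕ ≅ ℕ × ℕ`. The columns form a universal family of open sets: given open sets
`U i` and an injection `j` into `ℕ`, the map sending `X` to the set of codes `⟨j i, ⌜F⌝⟩` of the
finite `F ⊆ X` with `B_F ⊆ U i` is Scott continuous and pulls `MeetsColumn (j i)` back to `U i`.
Since `D_α` only uses the sets with index below `α`, and these are countably many, the preimage of
`D_α` of the columns is `D_α((U β)_β)`; hence `D_α` of the columns is Wadge complete. -/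

section Scott

attribute [local instance] ScottPN

open TopologicalSpace Set

theorem isTopologicalBasis_scottPN :
    IsTopologicalBasis {O : Set (Set ℕ) | ∃ A : Set ℕ, A.Finite ∧ O = {X : Set ℕ | A ⊆ X}} where
  exists_subset_inter := by
    rintro _ ⟨A, hA, rfl⟩ _ ⟨B, hB, rfl⟩ X hX
    exact ⟨{X | A ∪ B ⊆ X}, ⟨A ∪ B, hA.union hB, rfl⟩, union_subset hX.1 hX.2,
      fun Y hY => ⟨subset_union_left.trans hY, subset_union_right.trans hY⟩⟩
  sUnion_eq := sUnion_eq_univ_iff.mpr fun X => ⟨_, ⟨∅, finite_empty, rfl⟩, empty_subset X⟩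
  eq_generateFrom := rfl

theorem isOpen_scottPN_iff {U : Set (Set ℕ)} :
    IsOpen U ↔ ∀ X ∈ U, ∃ F : Finset ℕ, ↑F ⊆ X ∧ {Y : Set ℕ | ↑F ⊆ Y} ⊆ U := by
  refine isTopologicalBasis_scottPN.isOpen_iff.trans (forall₂_congr fun X _ => ⟨?_, ?_⟩)
  · rintro ⟨_, ⟨A, hA, rfl⟩, hAX, hAU⟩
    exact ⟨hA.toFinset, by simpa using hAX, by simpa using hAU⟩
  · rintro ⟨F, hFX, hFU⟩
    exact ⟨_, ⟨F, F.finite_toSet, rfl⟩, hFX, hFU⟩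

theorem continuous_scottPN_of_isOpen_setOf_mem_s6 {E : Type*} [TopologicalSpace E]
    {f : E → Set ℕ} (h : ∀ n, IsOpen {x | n ∈ f x}) : Continuous f := by
  refine continuous_generateFrom_iff.mpr ?_
  rintro _ ⟨A, hA, rfl⟩
  have hpre : f ⁻¹' {X | A ⊆ X} = ⋂ a ∈ A, {x | a ∈ f x} := by
    ext x
    simp only [mem_preimage, mem_ofPred_eq, mem_iInter₂, subset_def]
  rw [hpre]
  exact hA.isOpen_biInter fun a _ => h a

def MeetsColumn (n : ℕ) : Set (Set ℕ) := {X | ∃ k, Nat.pair n k ∈ X}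

theorem isOpen_meetsColumn (n : ℕ) : IsOpen (MeetsColumn n) :=
  isOpen_scottPN_iff.mpr fun _ ⟨k, hk⟩ =>
    ⟨{Nat.pair n k}, by simpa using hk, fun _ hY => ⟨k, by simpa using hY⟩⟩

theorem exists_continuous_preimage_meetsColumn {ι : Type*} {j : ι → ℕ} (hj : j.Injective)
    {U : ι → Set (Set ℕ)} (hU : ∀ i, IsOpen (U i)) :
    ∃ f : Set ℕ → Set ℕ, Continuous f ∧ ∀ i, f ⁻¹' MeetsColumn (j i) = U i := by
  refine ⟨fun X => {n | ∃ i, ∃ F : Finset ℕ, {Y : Set ℕ | ↑F ⊆ Y} ⊆ U i ∧ ↑F ⊆ X ∧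
      n = Nat.pair (j i) (Encodable.encode F)}, ?_, fun i => ?_⟩
  · refine continuous_scottPN_of_isOpen_setOf_mem_s6 fun n => isOpen_scottPN_iff.mpr ?_
    rintro X ⟨i, F, hFU, hFX, rfl⟩
    exact ⟨F, hFX, fun Y hY => ⟨i, F, hFU, hY, rfl⟩⟩
  · ext X
    refine ⟨?_, fun hX => ?_⟩
    · rintro ⟨k, i', F, hFU, hFX, hk⟩
      obtain rfl := hj (Nat.pair_eq_pair.mp hk).1
      exact hFU hFX
    · obtain ⟨F, hFX, hFU⟩ := isOpen_scottPN_iff.mp (hU i) X hX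
      exact ⟨_, i, F, hFU, hFX, rfl⟩

end Scott

theorem preimage_DOp {E F : Type*} {f : E → F} {α : Ordinal} {U : Ordinal → Set E}
    {V : Ordinal → Set F} (h : ∀ β < α, f ⁻¹' V β = U β) : f ⁻¹' DOp α V = DOp α U := by
  simp only [DOp, Set.preimage_iUnion₂, Set.preimage_sdiff]
  refine Set.iUnion₂_congr fun β hβ => ?_
  rw [h β hβ.1, Set.iUnion₂_congr fun γ (hγ : γ ∈ Set.Iio β) => h γ (lt_trans hγ hβ.1)]

theorem countable_Iio_of_card_le_aleph0 {α : Ordinal} (h : α.card ≤ Cardinal.aleph0) :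
    (Set.Iio α).Countable := by
  rw [← Set.countable_coe_iff, ← Cardinal.mk_le_aleph0_iff, Cardinal.mk_Iio_ordinal]
  simpa using Cardinal.lift_le.mpr h

theorem exists_wadge_complete_for_D_general
    (α : Ordinal) (h2 : α.card ≤ Cardinal.aleph0) :
    ∃ H : Set (Set ℕ), MemD ScottPN α H ∧
      ∀ A : Set (Set ℕ), MemD ScottPN α A → WadgeLe A H := by
  have := (countable_Iio_of_card_le_aleph0 h2).to_subtype
  obtain ⟨i, hi⟩ := exists_injective_nat (Set.Iio α)
  let V : Ordinal → Set (Set ℕ) := fun β => if h : β < α then MeetsColumn (i ⟨β, h⟩) else ∅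
  have hV : ∀ β (hβ : β < α), V β = MeetsColumn (i ⟨β, hβ⟩) := fun β hβ => dif_pos hβ
  refine ⟨DOp α V, ⟨V, fun β hβ => hV β hβ ▸ isOpen_meetsColumn _, rfl⟩, ?_⟩
  rintro _ ⟨U, hU, rfl⟩
  obtain ⟨f, hf, hfU⟩ :=
    exists_continuous_preimage_meetsColumn hi (U := fun β : Set.Iio α => U β) fun β => hU β β.2
  exact ⟨f, hf, (preimage_DOp fun β hβ => hV β hβ ▸ hfU ⟨β, hβ⟩).symm⟩

/-- For every countable ordinal `α ≥ 1` there exists a Wadge complete set for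
`D_α(𝒫(ℕ))`. -/
theorem exists_wadge_complete_for_D
    (α : Ordinal) (h1 : 1 ≤ α) (h2 : α.card ≤ Cardinal.aleph0) :
    ∃ H : Set (Set ℕ), MemD ScottPN α H ∧
      ∀ A : Set (Set ℕ), MemD ScottPN α A → WadgeLe A H :=
  exists_wadge_complete_for_D_general α h2
end

section
/- Let (X_β)_{β≤α} be a strictly decreasing chain of subsets of ℕ. Then the chain is scattered if and only if X_α is infinite and X_β ∖ X_{β+1} is infinite for every β < α. Moreover, if the chain is 𝒜-special for some 𝒜 ⊆ 𝒫(ℕ), then these conditions are also equivalent to the chain being 𝒜-scattered. -/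
/-!
A Scott-continuous injection `θ` of `𝒫(ℕ)` into the interval `[C, D]` exists iff `D \ C` is
infinite: if `e` enumerates `D \ C`, then `Z ↦ C ∪ {e 0} ∪ e '' (Z + 1)` is one (the extra point
`e 0` makes the inclusion `C ⊂ θ Z` strict), and conversely `Z ↦ θ Z \ C` injects `𝒫(ℕ)` into
`𝒫(D \ C)`. For an `𝒜`-special chain every set strictly above `X_{β+1}` and below `X_β` already has
the parity required of the range of `θ_β`, and no subset of `X_α` lies in `𝒜`, so every witness of
scatteredness is a witness of `𝒜`-scatteredness.
-/

open Topology

/-- A chain `(X_β)_{β ≤ α}` in `𝒫(ℕ)` is scattered. -/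
def Scattered (α : Ordinal) (X : Ordinal → Set ℕ) : Prop :=
  ∃ θ : Ordinal → Set ℕ → Set ℕ,
    (∀ β ≤ α, Continuous[ScottPN, ScottPN] (θ β) ∧ Function.Injective (θ β)) ∧
    (∀ Z : Set ℕ, θ α Z ⊆ X α) ∧
    (∀ β < α, ∀ Z : Set ℕ, X (β + 1) ⊂ θ β Z ∧ θ β Z ⊆ X β)

/-- A chain `(X_β)_{β ≤ α}` in `𝒫(ℕ)` is `A`-scattered. -/
def AScattered (A : Set (Set ℕ)) (α : Ordinal) (X : Ordinal → Set ℕ) : Prop :=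
  ∃ θ : Ordinal → Set ℕ → Set ℕ,
    (∀ β ≤ α, Continuous[ScottPN, ScottPN] (θ β) ∧ Function.Injective (θ β)) ∧
    (∀ Z : Set ℕ, θ α Z ⊆ X α) ∧
    (∀ β < α, ∀ Z : Set ℕ, X (β + 1) ⊂ θ β Z ∧ θ β Z ⊆ X β) ∧
    (∀ β ≤ α, ∀ Z : Set ℕ, θ β Z ∈ A ↔ ¬ SameParity β α)

theorem continuous_scottPN_iff {f : Set ℕ → Set ℕ} :
    Continuous[ScottPN, ScottPN] f ↔ ∀ A : Set ℕ, A.Finite → IsOpen[ScottPN] {Z | A ⊆ f Z} := by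
  refine continuous_generateFrom_iff.trans ⟨fun h A hA => h _ ⟨A, hA, rfl⟩, ?_⟩
  rintro h _ ⟨A, hA, rfl⟩
  exact h A hA

theorem isOpen_scottPN_setOf_subset {A : Set ℕ} (hA : A.Finite) : IsOpen[ScottPN] {Z | A ⊆ Z} :=
  TopologicalSpace.isOpen_generateFrom_of_mem ⟨A, hA, rfl⟩

theorem continuous_scottPN_union_left (C : Set ℕ) : Continuous[ScottPN, ScottPN] (C ∪ ·) := by
  refine continuous_scottPN_iff.2 fun A hA => ?_
  simp_rw [← Set.sdiff_subset_iff]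
  exact isOpen_scottPN_setOf_subset hA.sdiff

theorem continuous_scottPN_image {h : ℕ → ℕ} (hh : Function.Injective h) :
    Continuous[ScottPN, ScottPN] (h '' ·) := by
  refine continuous_scottPN_iff.2 fun A hA => ?_
  by_cases hAh : A ⊆ Set.range h
  · have hpre : {Z | A ⊆ h '' Z} = {Z | h ⁻¹' A ⊆ Z} := by
      ext Z
      conv_lhs => rw [Set.mem_ofPred_eq, ← Set.image_preimage_eq_of_subset hAh]
      exact Set.image_subset_image_iff hh
    rw [hpre]
    exact isOpen_scottPN_setOf_subset (hA.preimage hh.injOn)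
  · have hempty : {Z | A ⊆ h '' Z} = ∅ :=
      Set.eq_empty_of_forall_notMem fun Z hZ => hAh (hZ.trans (Set.image_subset_range h Z))
    rw [hempty]
    exact @isOpen_empty _ ScottPN

theorem injective_union_image {α β : Type*} {C : Set β} {h : α → β} (hh : Function.Injective h)
    (hC : Disjoint C (Set.range h)) : Function.Injective (fun Z => C ∪ h '' Z) := by
  have hcancel : ∀ Z, (C ∪ h '' Z) \ C = h '' Z := fun Z =>
    Set.union_sdiff_cancel_left (hC.mono_right (Set.image_subset_range h Z)).le_bot
  intro Z₁ Z₂ hZ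
  apply Set.image_injective.2 hh
  rw [← hcancel Z₁, ← hcancel Z₂]
  exact congrArg (· \ C) hZ

theorem exists_scottPN_embedding_between {C D : Set ℕ} (hCD : C ⊆ D) (hinf : (D \ C).Infinite) :
    ∃ θ : Set ℕ → Set ℕ, Continuous[ScottPN, ScottPN] θ ∧ Function.Injective θ ∧
      ∀ Z, C ⊂ θ Z ∧ θ Z ⊆ D := by
  let _ : TopologicalSpace (Set ℕ) := ScottPN
  let e : ℕ → ℕ := fun n => hinf.natEmbedding _ n
  have he : Function.Injective e := Subtype.val_injective.comp (hinf.natEmbedding _).injective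
  have heD : ∀ n, e n ∈ D \ C := fun n => (hinf.natEmbedding _ n).2
  have hdisj : Disjoint (insert (e 0) C) (Set.range (e ∘ Nat.succ)) := by
    rw [Set.disjoint_right]
    rintro _ ⟨n, rfl⟩ (h0 | hC)
    · exact Nat.succ_ne_zero n (he h0)
    · exact (heD _).2 hC
  refine ⟨fun Z => insert (e 0) C ∪ (e ∘ Nat.succ) '' Z,
    (continuous_scottPN_union_left _).comp (continuous_scottPN_image (he.comp Nat.succ_injective)),
    injective_union_image (he.comp Nat.succ_injective) hdisj, fun Z => ⟨?_, ?_⟩⟩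
  · exact ((Set.subset_insert _ _).trans Set.subset_union_left).ssubset_of_mem_notMem
      (Or.inl (Set.mem_insert _ _)) (heD 0).2
  · refine Set.union_subset (Set.insert_subset (heD 0).1 hCD) ?_
    rintro _ ⟨n, -, rfl⟩
    exact (heD _).1

theorem infinite_diff_of_injective {α : Type*} {C D : Set α} {θ : Set ℕ → Set α}
    (hθ : Function.Injective θ) (h : ∀ Z, C ⊆ θ Z ∧ θ Z ⊆ D) : (D \ C).Infinite := by
  intro hfin
  have hinj : Function.Injective fun Z => θ Z \ C := fun Z₁ Z₂ hZ => hθ <| by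
    rw [← Set.sdiff_union_of_subset (h Z₁).1, ← Set.sdiff_union_of_subset (h Z₂).1]
    exact congrArg (· ∪ C) hZ
  refine Set.infinite_range_of_injective hinj (hfin.finite_subsets.subset ?_)
  rintro _ ⟨Z, rfl⟩
  exact Set.sdiff_subset_sdiff_left (h Z).2

theorem Scattered.infinite {α : Ordinal} {X : Ordinal → Set ℕ} (h : Scattered α X) :
    (X α).Infinite ∧ ∀ β < α, (X β \ X (β + 1)).Infinite := by
  obtain ⟨θ, hθ, htop, hstep⟩ := h
  constructor
  · simpa using infinite_diff_of_injective (hθ α le_rfl).2 fun Z => ⟨Set.empty_subset _, htop Z⟩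
  · exact fun β hβ => infinite_diff_of_injective (hθ β hβ.le).2 fun Z =>
      ⟨(hstep β hβ Z).1.le, (hstep β hβ Z).2⟩

theorem scattered_of_infinite {α : Ordinal} {X : Ordinal → Set ℕ}
    (hX : ∀ β δ : Ordinal, β < δ → δ ≤ α → X δ ⊂ X β)
    (htop : (X α).Infinite) (hstep : ∀ β < α, (X β \ X (β + 1)).Infinite) : Scattered α X := by
  have hθstep : ∀ β < α, ∃ θ : Set ℕ → Set ℕ, Continuous[ScottPN, ScottPN] θ ∧
      Function.Injective θ ∧ ∀ Z, X (β + 1) ⊂ θ Z ∧ θ Z ⊆ X β := fun β hβ =>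
    exists_scottPN_embedding_between (hX β _ (lt_add_one β) (Order.add_one_le_iff.2 hβ)).subset
      (hstep β hβ)
  choose θ hθc hθi hθ using hθstep
  obtain ⟨θtop, htopc, htopi, hθtop⟩ :=
    exists_scottPN_embedding_between (Set.empty_subset (X α)) (by simpa using htop)
  refine ⟨fun β => if hβ : β < α then θ β hβ else θtop, fun β hβ => ?_, fun Z => ?_,
    fun β hβ Z => ?_⟩
  · rcases hβ.lt_or_eq with hlt | rfl
    · simpa only [dif_pos hlt] using ⟨hθc β hlt, hθi β hlt⟩
    · simpa only [lt_irrefl, dif_neg, not_false_eq_true] using ⟨htopc, htopi⟩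
  · simpa only [lt_irrefl, dif_neg, not_false_eq_true] using (hθtop Z).2
  · simpa only [dif_pos hβ] using hθ β hβ Z

theorem AScattered.scattered {A : Set (Set ℕ)} {α : Ordinal} {X : Ordinal → Set ℕ}
    (h : AScattered A α X) : Scattered α X :=
  let ⟨θ, hθ, htop, hstep, _⟩ := h
  ⟨θ, hθ, htop, hstep⟩

theorem SpecialChain.aScattered_of_scattered {A : Set (Set ℕ)} {α : Ordinal}
    {X : Ordinal → Set ℕ} (hA : SpecialChain A α X) (h : Scattered α X) : AScattered A α X := by
  obtain ⟨θ, hθ, htop, hstep⟩ := h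
  refine ⟨θ, hθ, htop, hstep, fun β hβ Z => ?_⟩
  rcases hβ.lt_or_eq with hlt | rfl
  · exact hA.2.1 β hlt (θ β Z) (hstep β hlt Z).2 (hstep β hlt Z).1
  · exact iff_of_false (hA.2.2 _ (htop Z)) (not_not.2 Iff.rfl)

/-- A strictly decreasing chain `(X_β)_{β ≤ α}` of subsets of `ℕ` is scattered
iff `X_α` and all the differences `X_β \ X_{β+1}` are infinite; and if the
chain is `𝒜`-special, these conditions are also equivalent to the chain being
`𝒜`-scattered. -/
theorem scattered_iff_infinite_differences (α : Ordinal) (X : Ordinal → Set ℕ)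
    (hX : ∀ β δ : Ordinal, β < δ → δ ≤ α → X δ ⊂ X β) :
    (Scattered α X ↔ ((X α).Infinite ∧ ∀ β < α, (X β \ X (β + 1)).Infinite)) ∧
    (∀ A : Set (Set ℕ), SpecialChain A α X → (Scattered α X ↔ AScattered A α X)) :=
  ⟨⟨Scattered.infinite, fun h => scattered_of_infinite hX h.1 h.2⟩,
    fun _ hA => ⟨hA.aScattered_of_scattered, AScattered.scattered⟩⟩
end

section
/- Let E be a topological space and α ≥ 1 an ordinal. (1) If A ∈ D_α(E) and L ⊆ E is open then A ∩ L ∈ D_α(E). (2) If α is infinite, A ∈ D_α(E) and F ⊆ E is closed then A ∩ F ∈ D_α(E). (3) If β > 0 is an ordinal with β + α = α, C ∈ D_β(E), D ∈ D_α(E), L ⊆ E is open, C ⊆ L and L ∩ D = ∅, then C ∪ D ∈ D_α(E). -/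
open Topology

/-!
Membership of `x` in `DOp α U` is decided by the parity of the least `β` with `x ∈ U β`.
For (1), intersect every `U β` with `L`. Parts (2) and (3) both follow from
`C ∪ D \ L ∈ D_α` for `C ∈ D_β`, `D ∈ D_α`, `C ⊆ L` open and `β + α = α ≥ ω`
(for (2) take `C = ∅ ∈ D_0` and `L = Fᶜ`). The sequence for `C ∪ D \ L` lists `U γ ∩ L` at the
indices `γ + ε`, with `ε ≤ 1` chosen so that parities relative to `α` match those relative
to `β`, then `L` at an index `S > β` of the parity of `α`, then `W` shifted by an even `T` with
`T + α = α`. A point of `L` is decided before `S`, any other point only by `W`.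
-/

open Ordinal Order

lemma exists_eq_add_natCast (o : Ordinal) :
    ∃ (l : Ordinal) (k : ℕ), (l = 0 ∨ IsSuccLimit l) ∧ o = l + k := by
  obtain ⟨k, hk⟩ := lt_omega0.1 (mod_lt o omega0_ne_zero)
  refine ⟨ω * (o / ω), k, ?_, by rw [← hk, div_add_mod]⟩
  rcases eq_or_ne (o / ω) 0 with h | h
  · simp [h]
  · exact .inr (isSuccLimit_mul_left isSuccLimit_omega0 (pos_iff_ne_zero.2 h))

lemma add_natCast_mod_omega0 {l : Ordinal} (hl : l = 0 ∨ IsSuccLimit l) (k : ℕ) :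
    (l + k) % ω = k := by
  obtain ⟨c, rfl⟩ : ω ∣ l := by
    rcases hl with rfl | hl
    · exact dvd_zero ω
    · exact isSuccPrelimit_iff_omega0_dvd.1 hl.isSuccPrelimit
  rw [mul_add_mod_self, natCast_mod_omega0]

lemma ordEven_add_natCast_iff {l : Ordinal} (hl : l = 0 ∨ IsSuccLimit l) (k : ℕ) :
    OrdEven (l + k) ↔ Even k := by
  constructor
  · rintro ⟨l', m, hl', h⟩
    have hmod := congrArg (· % ω) h
    simp only [add_natCast_mod_omega0 hl] at hmod
    rw [show (2 * m : Ordinal) = (2 * m : ℕ) by norm_cast, add_natCast_mod_omega0 hl'] at hmod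
    exact ⟨m, by rw [Nat.cast_inj.1 hmod]; ring⟩
  · rintro ⟨m, rfl⟩
    exact ⟨l, m, hl, by rw [← two_mul]; push_cast; rfl⟩

lemma ordEven_zero : OrdEven 0 := ⟨0, 0, .inl rfl, by simp⟩

lemma ordEven_add_one (o : Ordinal) : OrdEven (o + 1) ↔ ¬ OrdEven o := by
  obtain ⟨l, k, hl, rfl⟩ := exists_eq_add_natCast o
  rw [add_assoc, ← Nat.cast_add_one, ordEven_add_natCast_iff hl, ordEven_add_natCast_iff hl,
    Nat.even_add_one]

lemma ordEven_of_isSuccLimit {o : Ordinal} (ho : IsSuccLimit o) : OrdEven o :=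
  ⟨o, 0, .inr ho, by simp⟩

lemma ordEven_add_iff {e : Ordinal} (he : OrdEven e) (d : Ordinal) :
    OrdEven (e + d) ↔ OrdEven d := by
  induction d using Ordinal.limitRecOn with
  | zero => rw [add_zero]; exact iff_of_true he ordEven_zero
  | add_one d ih => rw [← add_assoc, ordEven_add_one, ordEven_add_one, ih]
  | limit d hd _ =>
    exact iff_of_true (ordEven_of_isSuccLimit (isSuccLimit_add e hd)) (ordEven_of_isSuccLimit hd)

lemma sameParity_add_one_iff {o a : Ordinal} : SameParity (o + 1) a ↔ ¬ SameParity o a := by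
  unfold SameParity; rw [ordEven_add_one]; tauto

lemma sameParity_add_add_iff {e : Ordinal} (he : OrdEven e) {a b : Ordinal} :
    SameParity (e + a) (e + b) ↔ SameParity a b := by
  unfold SameParity; rw [ordEven_add_iff he, ordEven_add_iff he]

lemma exists_natCast_pos_ordEven_add_iff (o : Ordinal) (p : Prop) :
    ∃ n : ℕ, 0 < n ∧ (OrdEven (o + n) ↔ p) := by
  by_cases h : OrdEven (o + 1) ↔ p
  · exact ⟨1, one_pos, by simpa using h⟩
  · refine ⟨2, two_pos, ?_⟩
    rw [show ((2 : ℕ) : Ordinal) = 1 + 1 by norm_num, ← add_assoc, ordEven_add_one]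
    tauto

lemma exists_sameParity_add_le_one (β α : Ordinal) :
    ∃ ε ≤ (1 : Ordinal), ∀ γ, SameParity (γ + ε) α ↔ SameParity γ β := by
  by_cases h : SameParity β α
  · refine ⟨0, zero_le_one, fun γ => ?_⟩
    unfold SameParity at *; rw [add_zero]; tauto
  · refine ⟨1, le_rfl, fun γ => ?_⟩
    rw [sameParity_add_one_iff]
    unfold SameParity at *; tauto

lemma omega0_le_of_add_eq_right {α β : Ordinal} (hβ : 0 < β) (hβα : β + α = α) : ω ≤ α :=
  (le_mul_right ω hβ).trans (add_eq_right_iff_mul_omega0_le.1 hβα)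

namespace DOp

variable {E : Type*} {α β ε S T : Ordinal} {L : Set E} {P U V W : Ordinal → Set E} {x : E}

lemma mem_iff : x ∈ DOp α U ↔
    ∃ β < α, ¬ SameParity β α ∧ x ∈ U β ∧ ∀ γ < β, x ∉ U γ := by
  simp only [DOp, Set.mem_iUnion, Set.mem_ofPred_eq, Set.mem_sdiff, Set.mem_Iio, exists_prop,
    not_exists, not_and, and_assoc]

lemma mem_iff_of_least {β : Ordinal} (hβ : β < α) (hx : x ∈ U β) (hmin : ∀ γ < β, x ∉ U γ) :
    x ∈ DOp α U ↔ ¬ SameParity β α := by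
  rw [mem_iff]
  refine ⟨fun ⟨β', hβ', hpar, hx', hmin'⟩ => ?_, fun hpar => ⟨β, hβ, hpar, hx, hmin⟩⟩
  obtain rfl : β' = β := le_antisymm (not_lt.1 (hmin' β · hx)) (not_lt.1 fun h => hmin β' h hx')
  exact hpar

lemma notMem_of_forall_notMem (hx : ∀ β < α, x ∉ U β) : x ∉ DOp α U := by
  rw [mem_iff]
  rintro ⟨β, hβ, -, hxβ, -⟩
  exact hx β hβ hxβ

lemma exists_least_mem {β : Ordinal} (hx : x ∈ U β) :
    ∃ γ ≤ β, x ∈ U γ ∧ ∀ δ < γ, x ∉ U δ := by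
  obtain ⟨γ, hγ, hmin⟩ := WellFounded.has_min wellFounded_lt {γ | x ∈ U γ} ⟨β, hx⟩
  exact ⟨γ, not_lt.1 (hmin β hx), hγ, fun δ hδ hxδ => hmin δ hxδ hδ⟩

lemma mem_congr (h : ∀ β < α, x ∈ U β ↔ x ∈ V β) : x ∈ DOp α U ↔ x ∈ DOp α V := by
  simp only [mem_iff]
  refine exists_congr fun β => and_congr_right fun hβ => and_congr_right fun _ => ?_
  exact and_congr (h β hβ) (forall₂_congr fun γ hγ => not_congr (h γ (hγ.trans hβ)))

lemma mem_add_iff {T : Ordinal} (hT : OrdEven T) (hx : ∀ ξ < T, x ∉ V ξ) :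
    x ∈ DOp (T + α) V ↔ x ∈ DOp α (fun γ => V (T + γ)) := by
  have hmin : ∀ γ, (∀ δ < γ, x ∉ V (T + δ)) → ∀ ξ < T + γ, x ∉ V ξ := by
    intro γ hγ ξ hξ
    rcases lt_or_ge ξ T with hξT | hTξ
    · exact hx ξ hξT
    · rw [← Ordinal.add_sub_cancel_of_le hTξ] at hξ ⊢
      exact hγ _ (lt_of_add_lt_add_left hξ)
  simp only [mem_iff]
  constructor
  · rintro ⟨ξ, hξ, hpar, hxξ, hξmin⟩
    obtain ⟨γ, rfl⟩ : ∃ γ, ξ = T + γ :=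
      ⟨ξ - T, (Ordinal.add_sub_cancel_of_le (not_lt.1 fun h => hx ξ h hxξ)).symm⟩
    exact ⟨γ, lt_of_add_lt_add_left hξ, by rwa [sameParity_add_add_iff hT] at hpar, hxξ,
      fun δ hδ => hξmin _ ((add_lt_add_iff_left T).2 hδ)⟩
  · rintro ⟨γ, hγ, hpar, hxγ, hγmin⟩
    exact ⟨T + γ, (add_lt_add_iff_left T).2 hγ, by rwa [sameParity_add_add_iff hT], hxγ,
      hmin γ hγmin⟩


def seqAppend (T : Ordinal) (P W : Ordinal → Set E) (ξ : Ordinal) : Set E :=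
  if ξ < T then P ξ else W (ξ - T)

lemma seqAppend_of_lt {ξ : Ordinal} (hξ : ξ < T) : seqAppend T P W ξ = P ξ := if_pos hξ

@[simp]
lemma seqAppend_add (γ : Ordinal) : seqAppend T P W (T + γ) = W γ := by
  rw [seqAppend, if_neg (not_lt.2 le_self_add), Ordinal.add_sub_cancel]

lemma mem_seqAppend_iff_of_mem (hTα : T ≤ α) {ξ₀ : Ordinal} (hξ₀ : ξ₀ < T) (hx : x ∈ P ξ₀) :
    x ∈ DOp α (seqAppend T P W) ↔ x ∈ DOp α P := by
  obtain ⟨ξ, hξξ₀, hxξ, hmin⟩ := exists_least_mem hx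
  have hξ : ξ < T := hξξ₀.trans_lt hξ₀
  rw [mem_iff_of_least (hξ.trans_le hTα) hxξ hmin,
    mem_iff_of_least (hξ.trans_le hTα) (by rwa [seqAppend_of_lt hξ]) fun δ hδ => ?_]
  rw [seqAppend_of_lt (hδ.trans hξ)]
  exact hmin δ hδ

def shiftRestrict (β ε : Ordinal) (L : Set E) (U : Ordinal → Set E) (ξ : Ordinal) : Set E :=
  L ∩ ⋃ γ ∈ {γ | γ < β ∧ γ + ε = ξ}, U γ

lemma mem_shiftRestrict {ξ : Ordinal} :
    x ∈ shiftRestrict β ε L U ξ ↔ x ∈ L ∧ ∃ γ < β, γ + ε = ξ ∧ x ∈ U γ := by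
  simp only [shiftRestrict, Set.mem_inter_iff, Set.mem_iUnion, Set.mem_ofPred_eq, exists_prop,
    and_assoc]

lemma isOpen_update_shiftRestrict {t : TopologicalSpace E} (hL : IsOpen[t] L)
    (hU : ∀ γ < β, IsOpen[t] (U γ)) (ξ : Ordinal) :
    IsOpen[t] (Function.update (shiftRestrict β ε L U) S L ξ) := by
  rcases eq_or_ne ξ S with rfl | hξ
  · rwa [Function.update_self]
  · rw [Function.update_of_ne hξ]
    exact hL.inter (isOpen_biUnion fun γ hγ => hU γ hγ.1)

lemma notMem_update_shiftRestrict (hx : x ∉ L) (ξ : Ordinal) :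
    x ∉ Function.update (shiftRestrict β ε L U) S L ξ := by
  rcases eq_or_ne ξ S with rfl | hξ
  · rwa [Function.update_self]
  · rw [Function.update_of_ne hξ, mem_shiftRestrict]
    exact fun h => hx h.1

lemma mem_update_shiftRestrict_iff (hx : x ∈ L)
    (hεpar : ∀ γ, SameParity (γ + ε) α ↔ SameParity γ β) (hβS : ∀ γ < β, γ + ε < S)
    (hSα : S < α) (hSpar : SameParity S α) :
    x ∈ DOp α (Function.update (shiftRestrict β ε L U) S L) ↔ x ∈ DOp β U := by
  set V := Function.update (shiftRestrict β ε L U) S L with hV_def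
  have hV : ∀ ξ < S, x ∈ V ξ → ∃ γ < β, γ + ε = ξ ∧ x ∈ U γ := fun ξ hξ hxξ => by
    rw [hV_def, Function.update_of_ne hξ.ne, mem_shiftRestrict] at hxξ
    exact hxξ.2
  by_cases hC : ∃ γ < β, x ∈ U γ
  · obtain ⟨γ₀, hγ₀, hxγ₀⟩ := hC
    obtain ⟨γ, hγγ₀, hxγ, hγmin⟩ := exists_least_mem hxγ₀
    have hγ : γ < β := hγγ₀.trans_lt hγ₀
    have hxV : x ∈ V (γ + ε) := by
      rw [hV_def, Function.update_of_ne (hβS γ hγ).ne, mem_shiftRestrict]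
      exact ⟨hx, γ, hγ, rfl, hxγ⟩
    have hVmin : ∀ ξ < γ + ε, x ∉ V ξ := fun ξ hξ hxξ => by
      obtain ⟨γ', -, rfl, hxγ'⟩ := hV ξ (hξ.trans (hβS γ hγ)) hxξ
      exact hγmin γ' (lt_of_not_ge fun h => hξ.not_ge (add_le_add_left h ε)) hxγ'
    rw [mem_iff_of_least hγ hxγ hγmin, mem_iff_of_least ((hβS γ hγ).trans hSα) hxV hVmin,
      hεpar]
  · push Not at hC
    have hVmin : ∀ ξ < S, x ∉ V ξ := fun ξ hξ hxξ => by
      obtain ⟨γ, hγ, -, hxγ⟩ := hV ξ hξ hxξ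
      exact hC γ hγ hxγ
    rw [mem_iff_of_least hSα (by rwa [hV_def, Function.update_self]) hVmin]
    exact iff_of_false (not_not.2 hSpar) (notMem_of_forall_notMem hC)

end DOp

namespace MemD

open DOp

variable {E : Type*} {t : TopologicalSpace E} {α β : Ordinal}

lemma inter_of_isOpen {A L : Set E} (hA : MemD t α A) (hL : IsOpen[t] L) :
    MemD t α (A ∩ L) := by
  obtain ⟨U, hU, rfl⟩ := hA
  refine ⟨fun β => U β ∩ L, fun β hβ => (hU β hβ).inter hL, ?_⟩
  ext x
  by_cases hx : x ∈ L
  · simp only [Set.mem_inter_iff, hx, and_true]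
    exact mem_congr fun β _ => by simp [hx]
  · simp only [Set.mem_inter_iff, hx, and_false, false_iff]
    exact notMem_of_forall_notMem fun β _ h => hx h.2

lemma zero_empty : MemD t 0 (∅ : Set E) :=
  ⟨fun _ => ∅, fun _ _ => isOpen_empty, by ext; simp [DOp.mem_iff]⟩

theorem union_sdiff (hω : ω ≤ α) (hβα : β + α = α) {C D L : Set E} (hC : MemD t β C)
    (hD : MemD t α D) (hL : IsOpen[t] L) (hCL : C ⊆ L) : MemD t α (C ∪ D \ L) := by
  obtain ⟨U, hU, rfl⟩ := hC
  obtain ⟨W, hW, rfl⟩ := hD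
  obtain ⟨ε, hε1, hεpar⟩ := exists_sameParity_add_le_one β α
  obtain ⟨n, hn, hSpar⟩ := exists_natCast_pos_ordEven_add_iff β (OrdEven α)
  obtain ⟨m, hm, hT⟩ := exists_natCast_pos_ordEven_add_iff (β + n) True
  set S : Ordinal := β + n
  set T : Ordinal := S + m
  replace hT : OrdEven T := hT.2 trivial
  have hTα : T + α = α := by simp only [T, S, add_assoc, natCast_add_of_omega0_le hω, hβα]
  have hST : S < T := lt_add_of_pos_right S (by exact_mod_cast hm)
  have hTle : T ≤ α := hTα ▸ le_self_add
  have hSα : S < α := hST.trans_le hTle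
  have hβS : ∀ γ < β, γ + ε < S := fun γ hγ => calc
    γ + ε ≤ γ + 1 := add_le_add_right hε1 γ
    _ ≤ β := add_one_le_of_lt hγ
    _ < S := lt_add_of_pos_right β (by exact_mod_cast hn)
  set P := Function.update (shiftRestrict β ε L U) S L
  refine ⟨seqAppend T P W, fun ξ hξ => ?_, ?_⟩
  · unfold seqAppend
    split_ifs
    · exact isOpen_update_shiftRestrict hL hU ξ
    · exact hW _ ((Ordinal.sub_le_self ξ T).trans_lt hξ)
  ext x
  by_cases hx : x ∈ L
  · have hxP : x ∈ P S := by simpa only [P, Function.update_self] using hx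
    rw [mem_seqAppend_iff_of_mem hTle hST hxP,
      mem_update_shiftRestrict_iff hx hεpar hβS hSα hSpar]
    simp [hx]
  · have hxP : ∀ ξ < T, x ∉ seqAppend T P W ξ := fun ξ hξ => by
      rw [seqAppend_of_lt hξ]
      exact notMem_update_shiftRestrict hx ξ
    have := mem_add_iff (α := α) hT hxP
    simp only [hTα, seqAppend_add] at this
    have hxC : x ∉ DOp β U := fun h => hx (hCL h)
    simp [hx, hxC, this]

end MemD

theorem D_class_operations_general {E : Type*} (t : TopologicalSpace E)
    (α : Ordinal) :
    (∀ (A L : Set E), MemD t α A → IsOpen[t] L → MemD t α (A ∩ L)) ∧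
    (Ordinal.omega0 ≤ α →
      ∀ (A F : Set E), MemD t α A → IsClosed[t] F → MemD t α (A ∩ F)) ∧
    (∀ β : Ordinal, 0 < β → β + α = α →
      ∀ (C D L : Set E), MemD t β C → MemD t α D → IsOpen[t] L →
        C ⊆ L → L ∩ D = ∅ → MemD t α (C ∪ D)) := by
  refine ⟨fun A L hA hL => hA.inter_of_isOpen hL, fun hω A F hA hF => ?_,
    fun β hβ hβα C D L hC hD hL hCL hLD => ?_⟩
  · have h := MemD.zero_empty.union_sdiff hω (zero_add α) hA hF.isOpen_compl (Set.empty_subset _)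
    rwa [Set.empty_union, Set.sdiff_compl] at h
  · have h := hC.union_sdiff (omega0_le_of_add_eq_right hβ hβα) hβα hD hL hCL
    rwa [sdiff_eq_self_iff_disjoint.2 (Set.disjoint_iff_inter_eq_empty.2 hLD)] at h

/-- Closure properties of the difference classes `D_α(E)`:
intersections with open sets, with closed sets (for infinite `α`),
and unions with a `D_β` set inside an open set disjoint from the `D_α` set
(when `β + α = α`). -/
theorem D_class_operations {E : Type*} (t : TopologicalSpace E)
    (α : Ordinal) (hα : 1 ≤ α) :
    (∀ (A L : Set E), MemD t α A → IsOpen[t] L → MemD t α (A ∩ L)) ∧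
    (Ordinal.omega0 ≤ α →
      ∀ (A F : Set E), MemD t α A → IsClosed[t] F → MemD t α (A ∩ F)) ∧
    (∀ β : Ordinal, 0 < β → β + α = α →
      ∀ (C D L : Set E), MemD t β C → MemD t α D → IsOpen[t] L →
        C ⊆ L → L ∩ D = ∅ → MemD t α (C ∪ D)) :=
  D_class_operations_general t α
end

section
/- The family 𝒮₂ = {X ⊆ ℕ : ∃ n, 2n ∈ X and 2n+1 ∉ X} is Wadge complete for Σ⁰₂(𝒫(ℕ)): 𝒮₂ ∈ Σ⁰₂(𝒫(ℕ)) and every family in Σ⁰₂(𝒫(ℕ)) is Wadge reducible to 𝒮₂. -/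
open Topology

/-- Membership in `Σ⁰₂(E)`: countable unions of differences of open sets. -/
def MemSigma2 {E : Type*} (t : TopologicalSpace E) (A : Set E) : Prop :=
  ∃ U V : ℕ → Set E, (∀ n, IsOpen[t] (U n)) ∧ (∀ n, IsOpen[t] (V n)) ∧
    A = ⋃ n, U n \ V n
attribute [local instance] ScottPN

def 𝒮₂ : Set (Set ℕ) := {X | ∃ n : ℕ, 2 * n ∈ X ∧ 2 * n + 1 ∉ X}

lemma isOpen_setOf_mem (a : ℕ) : IsOpen {X : Set ℕ | a ∈ X} :=
  TopologicalSpace.isOpen_generateFrom_of_mem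
    ⟨{a}, Set.finite_singleton a, by ext X; simp [Set.singleton_subset_iff]⟩

lemma continuous_scottPN_iff_s14 {E : Type*} [TopologicalSpace E] (f : E → Set ℕ) :
    Continuous f ↔ ∀ n, IsOpen {x | n ∈ f x} := by
  refine ⟨fun hf n => (isOpen_setOf_mem n).preimage hf, fun hf => ?_⟩
  refine continuous_generateFrom_iff.mpr ?_
  rintro _ ⟨A, hA, rfl⟩
  have hpre : f ⁻¹' {X | A ⊆ X} = ⋂ n ∈ A, {x | n ∈ f x} := by
    ext x
    simp [Set.subset_def]
  rw [hpre]
  exact hA.isOpen_biInter fun n _ => hf n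

def interleave {E : Type*} (U V : ℕ → Set E) (x : E) : Set ℕ :=
  {m | x ∈ if m % 2 = 0 then U (m / 2) else V (m / 2)}

section Interleave

variable {E : Type*} (U V : ℕ → Set E)

lemma two_mul_mem_interleave (x : E) (n : ℕ) : 2 * n ∈ interleave U V x ↔ x ∈ U n := by
  have hmod : 2 * n % 2 = 0 := by omega
  have hdiv : 2 * n / 2 = n := by omega
  simp only [interleave, Set.mem_ofPred_eq, hmod, hdiv, if_true]

lemma two_mul_add_one_mem_interleave (x : E) (n : ℕ) :
    2 * n + 1 ∈ interleave U V x ↔ x ∈ V n := by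
  have hmod : (2 * n + 1) % 2 ≠ 0 := by omega
  have hdiv : (2 * n + 1) / 2 = n := by omega
  simp only [interleave, Set.mem_ofPred_eq, hmod, hdiv, if_false]

lemma continuous_interleave [TopologicalSpace E] (hU : ∀ n, IsOpen (U n))
    (hV : ∀ n, IsOpen (V n)) : Continuous (interleave U V) := by
  refine (continuous_scottPN_iff_s14 _).mpr fun m => ?_
  by_cases hm : m % 2 = 0
  · simpa only [interleave, Set.mem_ofPred_eq, hm, if_true, Set.ofPred_mem_eq] using hU (m / 2)
  · simpa only [interleave, Set.mem_ofPred_eq, hm, if_false, Set.ofPred_mem_eq] using hV (m / 2)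

lemma interleave_preimage_𝒮₂ : interleave U V ⁻¹' 𝒮₂ = ⋃ n, U n \ V n := by
  ext x
  simp only [𝒮₂, Set.mem_preimage, Set.mem_ofPred_eq, Set.mem_iUnion, Set.mem_sdiff,
    two_mul_mem_interleave, two_mul_add_one_mem_interleave]

end Interleave

lemma memSigma2_𝒮₂ : MemSigma2 ScottPN 𝒮₂ :=
  ⟨fun n => {X | 2 * n ∈ X}, fun n => {X | 2 * n + 1 ∈ X},
    fun n => isOpen_setOf_mem _, fun n => isOpen_setOf_mem _, by
      ext X
      simp [𝒮₂]⟩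

/-- The family `𝒮₂ = {X | ∃ n, 2n ∈ X ∧ 2n+1 ∉ X}` is Wadge complete for
`Σ⁰₂(𝒫(ℕ))`. -/
theorem S2_wadge_complete_sigma2 :
    MemSigma2 ScottPN {X : Set ℕ | ∃ n : ℕ, 2 * n ∈ X ∧ 2 * n + 1 ∉ X} ∧
    ∀ A : Set (Set ℕ), MemSigma2 ScottPN A →
      WadgeLe A {X : Set ℕ | ∃ n : ℕ, 2 * n ∈ X ∧ 2 * n + 1 ∉ X} := by
  refine ⟨memSigma2_𝒮₂, ?_⟩
  rintro A ⟨U, V, hU, hV, rfl⟩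
  exact ⟨interleave U V, continuous_interleave U V hU hV, (interleave_preimage_𝒮₂ U V).symm⟩
end

section
/- For every countable ordinal α < ω₁ there exists an 𝒮₂-alternating increasing chain of length α in 𝒫(ℕ): a family (X_δ)_{δ<α} of subsets of ℕ with X_δ ⊊ X_η whenever δ < η < α, and such that X_δ ∈ 𝒮₂ if and only if δ is even, where 𝒮₂ = {X ⊆ ℕ : ∃ n, 2n ∈ X and 2n+1 ∉ X}. -/
open Topology

/-!
Parity plays no role: any predicate `P` on a countable preorder `ι` is realised by a strictly
increasing chain, `X i ∈ 𝒮₂ ↔ P i`. Fix an injection `e : ι → ℕ`. The chain puts the whole block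
`{4 e j, …, 4 e j + 3}` into `X i` for every `j < i`; a full block contains both `2n` and `2n + 1`
or neither, so it never witnesses `𝒮₂`. When `P i` holds, `X i` also gets the single marker
`4 e i + 2` without `4 e i + 3`, which is then the only witness. The point `4 e i + 3` lies in
`X j` exactly when `i < j`, which makes the chain strictly increasing.
-/

def S₂ : Set (Set ℕ) := {X | ∃ n : ℕ, 2 * n ∈ X ∧ 2 * n + 1 ∉ X}

section AlternatingChain

variable {ι : Type*} [Preorder ι] {e : ι → ℕ} {P : ι → Prop} {i j : ι}

def alternatingChain (e : ι → ℕ) (P : ι → Prop) (i : ι) : Set ℕ :=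
  {m | ∃ j < i, e j = m / 4} ∪ {m | P i ∧ m = 4 * e i + 2}

theorem four_mul_add_three_mem_alternatingChain_iff (he : Function.Injective e) :
    4 * e j + 3 ∈ alternatingChain e P i ↔ j < i := by
  constructor
  · rintro (⟨k, hki, hk⟩ | ⟨-, h⟩)
    · rwa [← he (by omega : e k = e j)]
    · omega
  · exact fun hji => Or.inl ⟨j, hji, by omega⟩

theorem alternatingChain_strictMono (he : Function.Injective e) :
    StrictMono (alternatingChain e P) := by
  intro i j hij
  have hsub : alternatingChain e P i ⊆ alternatingChain e P j := by
    rintro m (⟨k, hki, hk⟩ | ⟨-, rfl⟩)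
    · exact Or.inl ⟨k, hki.trans hij, hk⟩
    · exact Or.inl ⟨i, hij, by omega⟩
  refine (Set.ssubset_iff_of_subset hsub).2 ⟨4 * e i + 3, ?_, ?_⟩
  · exact (four_mul_add_three_mem_alternatingChain_iff he).2 hij
  · exact fun h => lt_irrefl i ((four_mul_add_three_mem_alternatingChain_iff he).1 h)

theorem alternatingChain_mem_S₂_iff (he : Function.Injective e) :
    alternatingChain e P i ∈ S₂ ↔ P i := by
  constructor
  · rintro ⟨n, (⟨k, hki, hk⟩ | ⟨hP, -⟩), hn⟩
    · exact absurd (Or.inl ⟨k, hki, by omega⟩) hn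
    · exact hP
  · intro hP
    refine ⟨2 * e i + 1, Or.inr ⟨hP, by ring⟩, fun h => lt_irrefl i ?_⟩
    exact (four_mul_add_three_mem_alternatingChain_iff he).1 (by convert h using 1; ring)

theorem exists_strictMono_mem_S₂_iff [Countable ι] (P : ι → Prop) :
    ∃ X : ι → Set ℕ, StrictMono X ∧ ∀ i, X i ∈ S₂ ↔ P i := by
  obtain ⟨e, he⟩ := exists_injective_nat ι
  exact ⟨alternatingChain e P, alternatingChain_strictMono he,
    fun _ => alternatingChain_mem_S₂_iff he⟩

end AlternatingChain

/-- For every countable ordinal `α` there is an `𝒮₂`-alternating increasing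
chain of length `α` in `𝒫(ℕ)`, where
`𝒮₂ = {X | ∃ n, 2n ∈ X ∧ 2n+1 ∉ X}`. -/
theorem exists_S2_alternating_increasing_chain
    (α : Ordinal) (hα : α.card ≤ Cardinal.aleph0) :
    ∃ X : Ordinal → Set ℕ,
      (∀ δ η : Ordinal, δ < η → η < α → X δ ⊂ X η) ∧
      (∀ δ < α, (X δ ∈ {X : Set ℕ | ∃ n : ℕ, 2 * n ∈ X ∧ 2 * n + 1 ∉ X}) ↔ OrdEven δ) := by
  have : Countable (Set.Iio α) := by
    rw [← Cardinal.mk_le_aleph0_iff, Cardinal.mk_Iio_ordinal]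
    exact Cardinal.lift_le_aleph0.2 hα
  obtain ⟨Y, hY_mono, hY_S₂⟩ := exists_strictMono_mem_S₂_iff fun δ : Set.Iio α => OrdEven δ
  refine ⟨fun δ => if h : δ < α then Y ⟨δ, h⟩ else ∅, fun δ η hδη hηα => ?_, fun δ hδ => ?_⟩
  · simpa only [dif_pos (hδη.trans hηα), dif_pos hηα] using
      hY_mono (show (⟨δ, hδη.trans hηα⟩ : Set.Iio α) < ⟨η, hηα⟩ from hδη)
  · simp only [dif_pos hδ]
    exact hY_S₂ ⟨δ, hδ⟩
end

section
/- Let ℛ be the linear order obtained from ℝ by replacing each rational by a copy of ℤ: ℛ = (ℝ ∖ ℚ) ∪ (ℚ × ℤ) ordered by x < (q,z) iff x < q, (q,z) < x iff q < x (for irrational x), and (q,z) < (q',z') iff q < q' or (q = q' and z < z'). Suppose H ⊆ 𝒫(ℕ) is Wadge hard for Σ⁰₂(𝒫(ℕ)). Then for every alternation 𝒜 on ℛ there is a family (u_ξ)_{ξ∈ℛ} of subsets of ℕ such that ξ ≤ η iff u_ξ ⊆ u_η, and u_ξ ∈ H iff ξ ∈ 𝒜. In particular, the complement 𝒫(ℕ)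 ∖ H has cardinality 2^{ℵ₀}. -/
open Topology

/-- The linear order `ℛ` obtained from `ℝ` by replacing each rational number
by a copy of `ℤ`. -/
def ROrd : Type := {x : ℝ // Irrational x} ⊕ (ℚ × ℤ)

/-- The strict order on `ℛ`. -/
def ROrdLt : ROrd → ROrd → Prop
  | .inl x, .inl y => x.1 < y.1
  | .inl x, .inr p => x.1 < (p.1 : ℝ)
  | .inr p, .inl y => (p.1 : ℝ) < y.1
  | .inr p, .inr p' => p.1 < p'.1 ∨ (p.1 = p'.1 ∧ p.2 < p'.2)

/-- The (non-strict) order on `ℛ`. -/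
def ROrdLe (a b : ROrd) : Prop := ROrdLt a b ∨ a = b

/-- `b` is the successor of `a` in `ℛ`. -/
def ROrdSucc (a b : ROrd) : Prop :=
  ROrdLt a b ∧ ¬ ∃ c : ROrd, ROrdLt a c ∧ ROrdLt c b

/-- An alternation on `ℛ`. -/
def Alternation (A : Set ROrd) : Prop :=
  (∀ a b : ROrd, ROrdSucc a b → (a ∈ A ↔ b ∉ A)) ∧
  (∀ a : ROrd, (¬ ∃ b, ROrdSucc b a) → (¬ ∃ b, ROrdSucc a b) → a ∉ A)


/-! The lower cuts `v ξ = {n | pₙ < ξ}` of `ℛ`, taken in an enumeration `(pₙ)` of `ℚ × ℤ`, form a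
chain of type `ℛ` in `𝒫(ℕ)`. An alternation `𝒜` is coded by the `Σ⁰₂` set of those `X` which, for
some `(q, z) ∈ 𝒜`, contain the index of `(q, z - 1)` but not that of `(q, z)`: on the chain this set
picks out exactly `v '' 𝒜`, because the irrationals lie in no alternation. A reduction `f` of this
set to `H` is continuous, hence monotone, so `u = f ∘ v` is a monotone chain with `u ξ ∈ H ↔ ξ ∈ 𝒜`.
It is an order embedding: every interval of `ℛ` contains a successor pair, and `u` separates such a
pair since `𝒜` alternates on it. Finally `u` maps the `2^ℵ₀` irrationals into `𝒫(ℕ) ∖ H`. -/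

theorem isOpen_setOf_mem_scottPN (a : ℕ) : IsOpen[ScottPN] {X : Set ℕ | a ∈ X} := by
  refine TopologicalSpace.GenerateOpen.basic _ ⟨{a}, Set.finite_singleton a, ?_⟩
  simp only [Set.singleton_subset_iff]

theorem IsOpen.isUpperSet_of_scottPN {O : Set (Set ℕ)} (hO : IsOpen[ScottPN] O) :
    IsUpperSet O := by
  induction hO with
  | basic O hO =>
    obtain ⟨A, -, rfl⟩ := hO
    exact fun X Y hXY hX => hX.trans hXY
  | univ => exact isUpperSet_univ
  | inter O₁ O₂ _ _ ih₁ ih₂ => exact ih₁.inter ih₂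
  | sUnion S _ ih => exact isUpperSet_sUnion ih

theorem Continuous.monotone_of_scottPN {f : Set ℕ → Set ℕ}
    (hf : Continuous[ScottPN, ScottPN] f) : Monotone f := fun _ _ hXY a ha =>
  (continuous_def.mp hf _ (isOpen_setOf_mem_scottPN a)).isUpperSet_of_scottPN hXY ha

theorem Monotone.le_iff_le_of_covBy_ne {α β : Type*} [LinearOrder α] [PartialOrder β]
    {u : α → β} (hu : Monotone u) (hdense : ∀ a b : α, a < b → ∃ c d, a ≤ c ∧ c ⋖ d ∧ d ≤ b)
    (hcov : ∀ a b : α, a ⋖ b → u a ≠ u b) {a b : α} : u a ≤ u b ↔ a ≤ b := by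
  refine ⟨fun h => le_of_not_gt fun hba => ?_, fun h => hu h⟩
  obtain ⟨c, d, hbc, hcd, hda⟩ := hdense b a hba
  exact hcov c d hcd ((hu hcd.le).antisymm ((hu hda).trans (h.trans (hu hbc))))

open Cardinal in
theorem Cardinal.mk_irrational : #{x : ℝ // Irrational x} = 𝔠 := by
  have hQ : #(Set.range ((↑) : ℚ → ℝ)) < #ℝ :=
    mk_range_le.trans_lt (by simpa [mk_real] using aleph0_lt_continuum)
  exact (mk_compl_of_infinite _ hQ).trans mk_real

namespace ROrd

def toRealLex : ROrd → ℝ ×ₗ ℤ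
  | .inl x => toLex (x.1, 0)
  | .inr p => toLex ((p.1 : ℝ), p.2)

theorem toRealLex_injective : Function.Injective toRealLex := by
  rintro (x | p) (y | p') h <;> simp only [toRealLex, toLex_inj, Prod.mk.injEq] at h
  · exact congrArg Sum.inl (Subtype.ext h.1)
  · exact absurd h.1 (x.2.ne_rat _)
  · exact absurd h.1.symm (y.2.ne_rat _)
  · exact congrArg Sum.inr (Prod.ext (by exact_mod_cast h.1) h.2)

noncomputable instance : LinearOrder ROrd := LinearOrder.lift' toRealLex toRealLex_injective

theorem lt_iff_rOrdLt {a b : ROrd} : a < b ↔ ROrdLt a b := by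
  change toRealLex a < toRealLex b ↔ _
  rcases a with x | p <;> rcases b with y | p' <;>
    simp only [toRealLex, Prod.Lex.toLex_lt_toLex, ROrdLt, Rat.cast_lt, Rat.cast_inj,
      lt_self_iff_false, and_false, or_false]
  · simp [x.2.ne_rat]
  · simp [(y.2.ne_rat _).symm]

theorem le_iff_rOrdLe {a b : ROrd} : a ≤ b ↔ ROrdLe a b := by
  rw [le_iff_lt_or_eq, lt_iff_rOrdLt, ROrdLe]

theorem covBy_iff_rOrdSucc {a b : ROrd} : a ⋖ b ↔ ROrdSucc a b := by
  simp only [CovBy, ROrdSucc, lt_iff_rOrdLt, not_exists, not_and]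

/-- Written `Sum.inr p`, a point of `ℚ × ℤ` would be typed as an element of `_ ⊕ _`, whose own
order is not that of `ℛ`. -/
abbrev ofPair : ℚ × ℤ → ROrd := Sum.inr

theorem ofPair_injective : Function.Injective ofPair := Sum.inr_injective

theorem ofPair_covBy (q : ℚ) (z : ℤ) : ofPair (q, z) ⋖ ofPair (q, z + 1) := by
  refine CovBy.of_image (OrderEmbedding.ofStrictMono toRealLex fun _ _ h => h) ?_
  exact Prod.Lex.toLex_covBy_toLex_iff.mpr (.inl ⟨rfl, Order.covBy_add_one z⟩)

theorem ofPair_pred_covBy (p : ℚ × ℤ) : ofPair (p.1, p.2 - 1) ⋖ ofPair p := by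
  simpa using ofPair_covBy p.1 (p.2 - 1)

theorem exists_ofPair_mem_Ico {a b : ROrd} (h : a < b) : ∃ p, a ≤ ofPair p ∧ ofPair p < b := by
  simp only [le_iff_lt_or_eq, lt_iff_rOrdLt] at h ⊢
  rcases a with x | p
  · rcases b with y | p'
    · obtain ⟨q, hxq, hqy⟩ := exists_rat_btwn (show x.1 < y.1 from h)
      exact ⟨(q, 0), .inl hxq, hqy⟩
    · obtain ⟨q, hxq, hqp⟩ := exists_rat_btwn (show x.1 < p'.1 from h)
      exact ⟨(q, 0), .inl hxq, .inl (by exact_mod_cast hqp)⟩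
  · exact ⟨p, .inr rfl, h⟩

theorem exists_covBy_between {a b : ROrd} (h : a < b) : ∃ c d, a ≤ c ∧ c ⋖ d ∧ d ≤ b := by
  obtain ⟨⟨q, z⟩, hac, hcb⟩ := exists_ofPair_mem_Ico h
  exact ⟨_, _, hac, ofPair_covBy q z, (ofPair_covBy q z).ge_of_gt hcb⟩

theorem covBy_iff {a b : ROrd} : a ⋖ b ↔ ∃ q z, a = ofPair (q, z) ∧ b = ofPair (q, z + 1) := by
  refine ⟨fun h => ?_, ?_⟩
  · obtain ⟨⟨q, z⟩, hac, hcb⟩ := exists_ofPair_mem_Ico h.lt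
    have hca : ofPair (q, z) = a := (h.le_of_lt hcb).antisymm hac
    exact ⟨q, z, hca.symm, (hca ▸ h).unique_right (ofPair_covBy q z)⟩
  · rintro ⟨q, z, rfl, rfl⟩
    exact ofPair_covBy q z

theorem _root_.Alternation.exists_eq_ofPair {A : Set ROrd} (hA : Alternation A) {ξ : ROrd}
    (hξ : ξ ∈ A) : ∃ p, ξ = ofPair p := by
  rcases ξ with x | p
  · refine absurd hξ (hA.2 _ ?_ ?_) <;> rintro ⟨b, hb⟩ <;>
      obtain ⟨q, z, h₁, h₂⟩ := covBy_iff.mp (covBy_iff_rOrdSucc.mpr hb)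
    exacts [Sum.inl_ne_inr h₂, Sum.inl_ne_inr h₁]
  · exact ⟨p, rfl⟩

theorem _root_.Alternation.mem_iff_notMem_of_covBy {A : Set ROrd} (hA : Alternation A)
    {a b : ROrd} (h : a ⋖ b) : a ∈ A ↔ b ∉ A :=
  hA.1 a b (covBy_iff_rOrdSucc.mp h)

theorem alternation_image_even : Alternation (ofPair '' {p | Even p.2}) := by
  refine ⟨fun a b hab => ?_, fun a _ hsucc => ?_⟩
  · obtain ⟨q, z, rfl, rfl⟩ := covBy_iff.mp (covBy_iff_rOrdSucc.mpr hab)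
    simp only [ofPair_injective.mem_set_image, Set.mem_ofPred_eq, Int.even_add_one, not_not]
  · rintro ⟨⟨q, z⟩, -, rfl⟩
    exact hsucc ⟨_, covBy_iff_rOrdSucc.mp (ofPair_covBy q z)⟩

def pairEnum : ℕ ≃ ℚ × ℤ := (Denumerable.eqv (ℚ × ℤ)).symm

def lowerCut (ξ : ROrd) : Set ℕ := {n | ofPair (pairEnum n) < ξ}

theorem monotone_lowerCut : Monotone lowerCut := fun _ _ h _ hn => lt_of_lt_of_le hn h

def jumpSet (A : Set ROrd) : Set (Set ℕ) :=
  ⋃ n, {X | ofPair (pairEnum n) ∈ A ∧ pairEnum.symm ((pairEnum n).1, (pairEnum n).2 - 1) ∈ X} \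
    {X | n ∈ X}

theorem memSigma2_jumpSet (A : Set ROrd) : MemSigma2 ScottPN (jumpSet A) := by
  refine ⟨_, _, fun n => ?_, isOpen_setOf_mem_scottPN, rfl⟩
  by_cases hn : ofPair (pairEnum n) ∈ A
  · simpa only [hn, true_and] using isOpen_setOf_mem_scottPN _
  · simpa only [hn, false_and, Set.ofPred_false] using @isOpen_empty _ ScottPN

theorem lowerCut_mem_jumpSet_iff {A : Set ROrd} (hA : Alternation A) {ξ : ROrd} :
    lowerCut ξ ∈ jumpSet A ↔ ξ ∈ A := by
  simp only [jumpSet, lowerCut, Set.mem_iUnion, Set.mem_sdiff, Set.mem_ofPred_eq,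
    Equiv.apply_symm_apply, not_lt]
  constructor
  · rintro ⟨n, ⟨hnA, hlt⟩, hle⟩
    have hξ : ξ ∈ Set.Ioc _ _ := ⟨hlt, hle⟩
    rw [(ofPair_pred_covBy _).Ioc_eq, Set.mem_singleton_iff] at hξ
    rwa [hξ]
  · intro hξ
    obtain ⟨p, rfl⟩ := hA.exists_eq_ofPair hξ
    exact ⟨pairEnum.symm p, by simpa [hξ] using (ofPair_pred_covBy p).lt⟩

section Reduction

variable {H : Set (Set ℕ)} {A : Set ROrd} {f : Set ℕ → Set ℕ}

theorem mem_iff_of_jumpSet_eq_preimage (hA : Alternation A) (hfH : jumpSet A = f ⁻¹' H)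
    (ξ : ROrd) : f (lowerCut ξ) ∈ H ↔ ξ ∈ A := by
  rw [← Set.mem_preimage, ← hfH, lowerCut_mem_jumpSet_iff hA]

theorem rOrdLe_iff_of_jumpSet_eq_preimage (hA : Alternation A)
    (hf : Continuous[ScottPN, ScottPN] f) (hfH : jumpSet A = f ⁻¹' H) (ξ η : ROrd) :
    ROrdLe ξ η ↔ f (lowerCut ξ) ⊆ f (lowerCut η) := by
  have hsep : ∀ a b : ROrd, a ⋖ b → f (lowerCut a) ≠ f (lowerCut b) := fun a b hab hfab => by
    have hab' := hA.mem_iff_notMem_of_covBy hab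
    rw [← mem_iff_of_jumpSet_eq_preimage hA hfH, ← mem_iff_of_jumpSet_eq_preimage hA hfH b,
      hfab] at hab'
    exact iff_not_self hab'
  rw [← le_iff_rOrdLe]
  exact ((hf.monotone_of_scottPN.comp monotone_lowerCut).le_iff_le_of_covBy_ne
    (fun _ _ => exists_covBy_between) hsep).symm

end Reduction

open Cardinal in
theorem mk_compl_eq_two_power_aleph0 {H : Set (Set ℕ)} {A : Set ROrd} (hA : Alternation A)
    {u : ROrd → Set ℕ} (hu : Function.Injective u) (huH : ∀ ξ, u ξ ∈ H ↔ ξ ∈ A) :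
    #↥Hᶜ = 2 ^ ℵ₀ := by
  rw [two_power_aleph0]
  refine ((mk_set_le _).trans_eq mk_set_nat).antisymm (mk_irrational ▸ ?_)
  refine mk_le_of_injective (f := fun x => ⟨u (.inl x), fun hx => ?_⟩) fun x y hxy => ?_
  · obtain ⟨p, hp⟩ := hA.exists_eq_ofPair ((huH _).mp hx)
    exact Sum.inl_ne_inr hp
  · exact Sum.inl_injective (hu (congrArg Subtype.val hxy))

end ROrd

open ROrd in
/-- If `H ⊆ 𝒫(ℕ)` is Wadge hard for `Σ⁰₂(𝒫(ℕ))` then for every alternation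
`𝒜` on `ℛ` there is an `(H,𝒜)`-alternating `ℛ`-chain in `𝒫(ℕ)`; in
particular the complement of `H` has cardinality `2^ℵ₀`. -/
theorem alternating_R_chains_of_sigma2_hard (H : Set (Set ℕ))
    (hH : ∀ A : Set (Set ℕ), MemSigma2 ScottPN A →
      ∃ f : Set ℕ → Set ℕ, Continuous[ScottPN, ScottPN] f ∧ A = f ⁻¹' H) :
    (∀ A : Set ROrd, Alternation A →
      ∃ u : ROrd → Set ℕ,
        (∀ ξ η : ROrd, ROrdLe ξ η ↔ u ξ ⊆ u η) ∧
        (∀ ξ : ROrd, u ξ ∈ H ↔ ξ ∈ A)) ∧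
    Cardinal.mk ↥(Hᶜ) = 2 ^ Cardinal.aleph0 := by
  have chain : ∀ A : Set ROrd, Alternation A → ∃ u : ROrd → Set ℕ,
      (∀ ξ η : ROrd, ROrdLe ξ η ↔ u ξ ⊆ u η) ∧ (∀ ξ : ROrd, u ξ ∈ H ↔ ξ ∈ A) := by
    intro A hA
    obtain ⟨f, hf, hfH⟩ := hH _ (memSigma2_jumpSet A)
    exact ⟨fun ξ => f (lowerCut ξ), rOrdLe_iff_of_jumpSet_eq_preimage hA hf hfH,
      mem_iff_of_jumpSet_eq_preimage hA hfH⟩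
  obtain ⟨u, hu_le, hu_mem⟩ := chain _ alternation_image_even
  have hu : Function.Injective u := fun ξ η h =>
    le_antisymm (le_iff_rOrdLe.mpr ((hu_le ξ η).mpr h.le))
      (le_iff_rOrdLe.mpr ((hu_le η ξ).mpr h.ge))
  exact ⟨chain, mk_compl_eq_two_power_aleph0 alternation_image_even hu hu_mem⟩
end
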